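/- Let n̄ = (n_1,…,n_r) with ∑_i n_i = n, and suppose given subsets A_1,…,A_r ⊆ [n]' = {1,…,n} with |A_i| = n_i. Put ζ_i = π_{A_i ∪ {0}} : [n] → [n_i]. Then the tuple (ζ_1,…,ζ_r) is an n̄-shuffle if and only if [n]' is the disjoint union of the sets A_1,…,A_r. -/

import Mathlib

/-- `σ_A : [m] → [n]` for a subset `A ⊆ [n]` with `|A| = m + 1`. -/
def sigmaA {n m : ℕ} (A : Finset (Fin (n + 1))) (h : A.card = m + 1) :
    Fin (m + 1) → Fin (n + 1) :=
  fun j => (A.orderIsoOfFin h j : Fin (n + 1))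

/-- `π_A : [n] → [m]` for a pointed subset `A ⊆ [n]` with `|A| = m + 1`. -/
def piA {n m : ℕ} (A : Finset (Fin (n + 1))) (h0 : (0 : Fin (n + 1)) ∈ A)
    (h : A.card = m + 1) (i : Fin (n + 1)) : Fin (m + 1) :=
  Finset.max' (Finset.univ.filter fun j => sigmaA A h j ≤ i)
    (by refine ⟨(A.orderIsoOfFin h).symm ⟨0, h0⟩,
          Finset.mem_filter.mpr ⟨Finset.mem_univ _, ?_⟩⟩
        have : sigmaA A h ((A.orderIsoOfFin h).symm ⟨0, h0⟩) = 0 := by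
          simp [sigmaA]
        rw [this]
        exact Fin.zero_le i)

/-! Since `0 ∉ A i`, the value `ζ i x` counts the elements of `A i` that are `≤ x`. The map `π_A`
is the upper adjoint of the order embedding `σ_A`, hence monotone and surjective. The tuple of
counts separates points exactly when every `y ≠ 0` lies in some `A i` (otherwise `y - 1` and `y`
have the same counts), i.e. when the `A i` cover `[n]'`; since `∑ |A i| = n = |[n]'|`, a cover
is automatically disjoint. -/

open Finset

section Counting

variable {ι α : Type*}

lemma Finset.pairwiseDisjoint_of_sum_card_le_card_biUnion [DecidableEq ι] [DecidableEq α]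
    {s : Finset ι} {t : ι → Finset α} (h : ∑ i ∈ s, #(t i) ≤ #(s.biUnion t)) :
    (s : Set ι).PairwiseDisjoint t := by
  intro i hi j hj hij
  by_contra hdisj
  obtain ⟨a, hai, haj⟩ := not_disjoint_iff.mp hdisj
  have hoverlap : 0 < #(t j ∩ (s.erase j).biUnion t) :=
    card_pos.mpr ⟨a, mem_inter.mpr ⟨haj, mem_biUnion.mpr ⟨i, mem_erase.mpr ⟨hij, hi⟩, hai⟩⟩⟩
  have hsplit : s.biUnion t = t j ∪ (s.erase j).biUnion t := by
    rw [← biUnion_insert, insert_erase (mem_coe.mp hj)]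
  have hunion := card_union_add_card_inter (t j) ((s.erase j).biUnion t)
  have hrest : #((s.erase j).biUnion t) ≤ ∑ k ∈ s.erase j, #(t k) := card_biUnion_le
  rw [← add_sum_erase s _ (mem_coe.mp hj), hsplit] at h
  omega

variable [LinearOrder α]

lemma injective_card_filter_le_iff [PredOrder α] (A : ι → Finset α) :
    Function.Injective (fun x i => #((A i).filter (· ≤ x))) ↔
      ∀ y, ¬IsMin y → ∃ i, y ∈ A i := by
  constructor
  · intro hinj y hy
    by_contra! hout
    refine (Order.pred_lt_of_not_isMin hy).ne (hinj (funext fun i => ?_))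
    refine congrArg card (filter_congr fun a ha => ?_)
    rw [Order.le_pred_iff_of_not_isMin hy, le_iff_lt_or_eq,
      or_iff_left (ne_of_mem_of_not_mem ha (hout i))]
  · intro hcover
    refine Function.Injective.of_lt_imp_ne fun x y hxy hcount => ?_
    obtain ⟨i, hyi⟩ := hcover y (not_isMin_of_lt hxy)
    have hsub : (A i).filter (· ≤ x) ⊂ (A i).filter (· ≤ y) :=
      ssubset_iff_of_subset (monotone_filter_right (A i) fun _ _ hax => hax.trans hxy.le) |>.mpr
        ⟨y, mem_filter.mpr ⟨hyi, le_rfl⟩, fun hy => (mem_filter.mp hy).2.not_gt hxy⟩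
    exact (card_lt_card hsub).ne (congrFun hcount i)

end Counting

section PiA

variable {n m : ℕ} (A : Finset (Fin (n + 1))) (h0 : (0 : Fin (n + 1)) ∈ A) (h : A.card = m + 1)

lemma sigmaA_eq_orderEmbOfFin : sigmaA A h = A.orderEmbOfFin h :=
  funext fun j => A.coe_orderIsoOfFin_apply h j

lemma sigmaA_strictMono : StrictMono (sigmaA A h) := by
  rw [sigmaA_eq_orderEmbOfFin]
  exact (A.orderEmbOfFin h).strictMono

lemma gc_sigmaA_piA : GaloisConnection (sigmaA A h) (piA A h0 h) := by
  intro j x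
  constructor
  · intro hj
    exact le_max' _ j (mem_filter.mpr ⟨mem_univ j, hj⟩)
  · intro hj
    exact ((sigmaA_strictMono A h).monotone hj).trans
      (mem_filter.mp (max'_mem (univ.filter fun j => sigmaA A h j ≤ x) _)).2

lemma piA_monotone : Monotone (piA A h0 h) :=
  (gc_sigmaA_piA A h0 h).monotone_u

lemma piA_sigmaA (j : Fin (m + 1)) : piA A h0 h (sigmaA A h j) = j :=
  le_antisymm ((sigmaA_strictMono A h).le_iff_le.mp ((gc_sigmaA_piA A h0 h).l_u_le _))
    ((gc_sigmaA_piA A h0 h).le_u_l j)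

lemma piA_surjective : Function.Surjective (piA A h0 h) :=
  fun j => ⟨sigmaA A h j, piA_sigmaA A h0 h j⟩

lemma val_piA_add_one (x : Fin (n + 1)) : (piA A h0 h x : ℕ) + 1 = #(A.filter (· ≤ x)) := by
  have hIic : univ.filter (fun j => sigmaA A h j ≤ x) = Iic (piA A h0 h x) := by
    ext j
    simp only [mem_filter, mem_univ, true_and, mem_Iic, (gc_sigmaA_piA A h0 h).le_iff_le]
  conv_rhs => rw [← A.map_orderEmbOfFin_univ h, filter_map, card_map]
  rw [← Fin.card_Iic, ← hIic, sigmaA_eq_orderEmbOfFin]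
  rfl

end PiA

lemma val_piA_insert_zero {n m : ℕ} (A : Finset (Fin (n + 1))) (h0 : (0 : Fin (n + 1)) ∉ A)
    (h : (insert 0 A).card = m + 1) (x : Fin (n + 1)) :
    (piA (insert 0 A) (mem_insert_self 0 A) h x : ℕ) = #(A.filter (· ≤ x)) := by
  have hcount := val_piA_add_one (insert 0 A) (mem_insert_self 0 A) h x
  rwa [filter_insert, if_pos (Fin.zero_le x),
    card_insert_of_notMem fun hx => h0 (mem_filter.mp hx).1, Nat.add_right_cancel_iff] at hcount

/-- Given `n̄ = (n_1, …, n_r)` with `∑ n_i = n` and subsets `A_i ⊆ [n]' = {1, …, n}` with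
`|A_i| = n_i`, setting `ζ_i = π_{A_i ∪ {0}}`, the tuple `(ζ_1, …, ζ_r)` is an `n̄`-shuffle
iff `[n]'` is the disjoint union of the `A_i`. -/
theorem shuffle_iff_disjoint_union {r n : ℕ} (nbar : Fin r → ℕ) (hsum : ∑ i, nbar i = n)
    (A : Fin r → Finset (Fin (n + 1))) (h0 : ∀ i, (0 : Fin (n + 1)) ∉ A i)
    (hcard : ∀ i, (A i).card = nbar i)
    (ζ : ∀ i, Fin (n + 1) → Fin (nbar i + 1))
    (hζ : ∀ i, ζ i = piA (insert 0 (A i)) (Finset.mem_insert_self 0 (A i))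
        (by rw [Finset.card_insert_of_notMem (h0 i), hcard i])) :
    ((∀ i, Monotone (ζ i) ∧ Function.Surjective (ζ i)) ∧
        Function.Injective (fun s => fun i => ζ i s)) ↔
      (Finset.univ.biUnion A = Finset.univ.filter (fun x : Fin (n + 1) => x ≠ 0) ∧
        ∀ i j, i ≠ j → Disjoint (A i) (A j)) := by
  have hshuffle : ∀ i, Monotone (ζ i) ∧ Function.Surjective (ζ i) := fun i => by
    rw [hζ i]
    exact ⟨piA_monotone _ _ _, piA_surjective _ _ _⟩
  have hcounts : (fun (f : ∀ i, Fin (nbar i + 1)) i => (f i : ℕ)) ∘ (fun s i => ζ i s) =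
      fun x i => #((A i).filter (· ≤ x)) := by
    funext x i
    simp only [Function.comp_apply, hζ i, val_piA_insert_zero (A i) (h0 i)]
  have hinjective : Function.Injective (fun s i => ζ i s) ↔ ∀ y, y ≠ 0 → ∃ i, y ∈ A i := by
    rw [← Function.Injective.of_comp_iff (fun f g hfg => funext fun i => Fin.ext (congrFun hfg i)),
      hcounts, injective_card_filter_le_iff]
    simp only [isMin_iff_eq_bot, bot_eq_zero]
  have hunion : univ.biUnion A = univ.filter (· ≠ 0) ↔ ∀ y, y ≠ 0 → ∃ i, y ∈ A i := by
    simp only [Finset.ext_iff, mem_biUnion, mem_univ, true_and, mem_filter]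
    exact ⟨fun hA y hy => (hA y).mpr hy,
      fun hcover y => ⟨fun ⟨i, hi⟩ hy => h0 i (hy ▸ hi), hcover y⟩⟩
  rw [and_iff_right hshuffle, hinjective, ← hunion]
  refine ⟨fun hA => ⟨hA, fun i j hij => ?_⟩, And.left⟩
  have hcard_union : ∑ i, #(A i) ≤ #(univ.biUnion A) := by
    simp [hA, filter_ne', hcard, hsum]
  exact pairwiseDisjoint_of_sum_card_le_card_biUnion hcard_union (mem_univ i) (mem_univ j) hij
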